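/- arXiv:1903.10063 — 6 statements merged into one kernel-verified Lean document; each statement's English description precedes it below -/
import Mathlib

section
/- Let μ be a probability measure on ℝᵖ such that μ{x : ⟨x,β⟩ = 0} = 0 for every unit vector β. Let η : ℝᵖ → [0,1] be measurable and let β⁰ be a unit vector satisfying the Bayes alignment: for μ-a.e. x, (2η(x) − 1)·sign(⟨x,β⁰⟩) = |2η(x) − 1|. Assume the transition condition: there exist C > 0 and t* ∈ (0,1/2) such that μ{x : |η(x) − 1/2| ≤ t} ≤ C·t for all t ∈ [0,t*]; and the wedge condition: there exists c₁ > 0 such that d_Δ(β,β⁰) ≥ c₁·‖β − β⁰‖ for every unit vector β. Then for every unit vector β: if d_Δ(β,β⁰) ≤ 2t*C then S(β⁰) − S(β) ≥ (c₁²/C)·‖β − β⁰‖², and if d_Δ(β,β⁰) > 2t*C then S(β⁰) − S(β) ≥ 2t*c₁·‖β − β⁰‖. -/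
open MeasureTheory

lemma measurable_real_sign : Measurable Real.sign := by
  unfold Real.sign
  exact (Measurable.ite (measurableSet_lt measurable_id measurable_const) measurable_const
    (Measurable.ite (measurableSet_lt measurable_const measurable_id) measurable_const
      measurable_const) :
      Measurable fun r : ℝ => if r < 0 then (-1:ℝ) else if 0 < r then 1 else 0)

lemma abs_real_sign (r : ℝ) : |Real.sign r| ≤ 1 := by
  rcases Real.sign_apply_eq r with h | h | h <;> rw [h] <;> norm_num

/-- The population score `S(β) = ∫ (2η(x) − 1)·sign(⟨x,β⟩) dμ(x)`. -/
noncomputable def popScore {p : ℕ} (μ : Measure (EuclideanSpace ℝ (Fin p)))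
    (η : EuclideanSpace ℝ (Fin p) → ℝ) (β : EuclideanSpace ℝ (Fin p)) : ℝ :=
  ∫ x, (2 * η x - 1) * Real.sign (inner ℝ x β : ℝ) ∂μ

/-- The wedge region `W(β,β') = {x : sign⟨x,β⟩ ≠ sign⟨x,β'⟩}`. -/
def wedge {p : ℕ} (β β' : EuclideanSpace ℝ (Fin p)) : Set (EuclideanSpace ℝ (Fin p)) :=
  {x | Real.sign (inner ℝ x β : ℝ) ≠ Real.sign (inner ℝ x β' : ℝ)}

/-- `d_Δ(β,β') = μ(W(β,β'))`. -/
noncomputable def dDelta {p : ℕ} (μ : Measure (EuclideanSpace ℝ (Fin p)))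
    (β β' : EuclideanSpace ℝ (Fin p)) : ℝ :=
  (μ (wedge β β')).toReal

theorem curvature_of_population_score {p : ℕ} (hp : 1 ≤ p)
    (μ : Measure (EuclideanSpace ℝ (Fin p))) [IsProbabilityMeasure μ]
    (hnull : ∀ β : EuclideanSpace ℝ (Fin p), ‖β‖ = 1 →
      μ {x | (inner ℝ x β : ℝ) = 0} = 0)
    (η : EuclideanSpace ℝ (Fin p) → ℝ) (hη : Measurable η)
    (hη01 : ∀ x, η x ∈ Set.Icc (0 : ℝ) 1)
    (β0 : EuclideanSpace ℝ (Fin p)) (hβ0 : ‖β0‖ = 1)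
    (hBayes : ∀ᵐ x ∂μ, (2 * η x - 1) * Real.sign (inner ℝ x β0 : ℝ) = |2 * η x - 1|)
    (C tstar : ℝ) (hC : 0 < C) (htstar : tstar ∈ Set.Ioo (0 : ℝ) (1/2))
    (htrans : ∀ t ∈ Set.Icc (0 : ℝ) tstar,
      (μ {x | |η x - 1/2| ≤ t}).toReal ≤ C * t)
    (c₁ : ℝ) (hc₁ : 0 < c₁)
    (hwedge : ∀ β : EuclideanSpace ℝ (Fin p), ‖β‖ = 1 →
      c₁ * ‖β - β0‖ ≤ dDelta μ β β0)
    (β : EuclideanSpace ℝ (Fin p)) (hβ : ‖β‖ = 1) :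
    (dDelta μ β β0 ≤ 2 * tstar * C →
      c₁ ^ 2 / C * ‖β - β0‖ ^ 2 ≤ popScore μ η β0 - popScore μ η β) ∧
    (2 * tstar * C < dDelta μ β β0 →
      2 * tstar * c₁ * ‖β - β0‖ ≤ popScore μ η β0 - popScore μ η β) := by
  -- basic measurability facts
  have hinner : ∀ γ : EuclideanSpace ℝ (Fin p),
      Measurable fun x : EuclideanSpace ℝ (Fin p) => (inner ℝ x γ : ℝ) :=
    fun γ => ((continuous_id.inner continuous_const)).measurable
  have hsgn : ∀ γ : EuclideanSpace ℝ (Fin p),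
      Measurable fun x : EuclideanSpace ℝ (Fin p) => Real.sign (inner ℝ x γ : ℝ) :=
    fun γ => measurable_real_sign.comp (hinner γ)
  have habs1 : ∀ x, |2 * η x - 1| ≤ 1 := by
    intro x
    rw [abs_le]
    constructor <;> linarith [(hη01 x).1, (hη01 x).2]
  have hint : ∀ γ : EuclideanSpace ℝ (Fin p),
      Integrable (fun x => (2 * η x - 1) * Real.sign (inner ℝ x γ : ℝ)) μ := by
    intro γ
    refine (integrable_const (1 : ℝ)).mono'
      (((( hη.const_mul 2).sub_const 1).mul (hsgn γ)).aestronglyMeasurable) ?_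
    filter_upwards with x
    rw [Real.norm_eq_abs, abs_mul]
    calc |2 * η x - 1| * |Real.sign (inner ℝ x γ : ℝ)|
        ≤ 1 * 1 := by
          gcongr <;> [exact habs1 x; exact abs_real_sign _]
      _ = 1 := by norm_num
  have hW : MeasurableSet (wedge β β0) := by
    have : MeasurableSet {x : EuclideanSpace ℝ (Fin p) |
        Real.sign (inner ℝ x β : ℝ) = Real.sign (inner ℝ x β0 : ℝ)} :=
      measurableSet_eq_fun (hsgn β) (hsgn β0)
    exact this.compl
  -- score difference equals the integral of the indicator function of the wedge
  have h0 : ∀ᵐ x ∂μ, (inner ℝ x β0 : ℝ) ≠ 0 := by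
    rw [ae_iff]
    simpa using hnull β0 hβ0
  have h1 : ∀ᵐ x ∂μ, (inner ℝ x β : ℝ) ≠ 0 := by
    rw [ae_iff]
    simpa using hnull β hβ
  have hAE : (fun x => (2 * η x - 1) * Real.sign (inner ℝ x β0 : ℝ)
        - (2 * η x - 1) * Real.sign (inner ℝ x β : ℝ))
      =ᵐ[μ] (wedge β β0).indicator (fun x => 2 * |2 * η x - 1|) := by
    filter_upwards [hBayes, h0, h1] with x hb hx0 hx1
    by_cases hx : x ∈ wedge β β0
    · rw [Set.indicator_of_mem hx]
      have hne : Real.sign (inner ℝ x β : ℝ) ≠ Real.sign (inner ℝ x β0 : ℝ) := hx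
      rcases Real.sign_apply_eq_of_ne_zero _ hx1 with hs | hs <;>
        rcases Real.sign_apply_eq_of_ne_zero _ hx0 with hs0 | hs0 <;>
          rw [hs0] at hb ⊢ <;> rw [hs] <;> first
            | (exact absurd (hs.trans hs0.symm) hne)
            | linarith
    · rw [Set.indicator_of_notMem hx]
      have heq : Real.sign (inner ℝ x β : ℝ) = Real.sign (inner ℝ x β0 : ℝ) := by
        by_contra h; exact hx h
      rw [heq]; ring
  have hdiff : popScore μ η β0 - popScore μ η β
      = ∫ x, (wedge β β0).indicator (fun x => 2 * |2 * η x - 1|) x ∂μ := by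
    rw [popScore, popScore, ← integral_sub (hint β0) (hint β), integral_congr_ae hAE]
  -- key lower bound for each t ∈ [0, tstar]
  have key : ∀ t ∈ Set.Icc (0 : ℝ) tstar,
      4 * t * (dDelta μ β β0 - C * t) ≤ popScore μ η β0 - popScore μ η β := by
    intro t ht
    set A : Set (EuclideanSpace ℝ (Fin p)) := {x | |η x - 1/2| ≤ t}ᶜ with hA_def
    have hA : MeasurableSet A :=
      (measurableSet_le ((hη.sub measurable_const).abs) measurable_const).compl
    have hle : ∀ x, (wedge β β0 ∩ A).indicator (fun _ => 4 * t) x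
        ≤ (wedge β β0).indicator (fun x => 2 * |2 * η x - 1|) x := by
      intro x
      by_cases hx : x ∈ wedge β β0 ∩ A
      · rw [Set.indicator_of_mem hx, Set.indicator_of_mem hx.1]
        have h2 : ¬ |η x - 1/2| ≤ t := hx.2
        have h3 : |2 * η x - 1| = 2 * |η x - 1/2| := by
          rw [show (2:ℝ) * η x - 1 = 2 * (η x - 1/2) by ring, abs_mul]
          norm_num
        rw [h3]
        nlinarith [not_le.mp h2]
      · rw [Set.indicator_of_notMem hx]
        exact Set.indicator_nonneg (fun y _ => by positivity) x
    have hintg : Integrable ((wedge β β0).indicator (fun x => 2 * |2 * η x - 1|)) μ := by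
      refine (integrable_const (2 : ℝ)).mono'
        (((((hη.const_mul 2).sub_const 1).abs.const_mul 2).indicator hW).aestronglyMeasurable) ?_
      filter_upwards with x
      rw [Real.norm_eq_abs]
      by_cases hx : x ∈ wedge β β0
      · rw [Set.indicator_of_mem hx, abs_of_nonneg (by positivity)]
        linarith [habs1 x]
      · rw [Set.indicator_of_notMem hx]
        simp
    have hintc : Integrable ((wedge β β0 ∩ A).indicator (fun _ => 4 * t)) μ :=
      (integrable_const _).indicator (hW.inter hA)
    have hmono := integral_mono hintc hintg hle
    rw [integral_indicator_const _ (hW.inter hA), smul_eq_mul] at hmono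
    -- measure bound
    have hsub : wedge β β0 ⊆ (wedge β β0 ∩ A) ∪ {x | |η x - 1/2| ≤ t} := by
      intro x hx
      by_cases hxa : x ∈ A
      · exact Or.inl ⟨hx, hxa⟩
      · exact Or.inr (not_not.mp hxa)
    have hmeas_le : μ (wedge β β0) ≤ μ (wedge β β0 ∩ A) + μ {x | |η x - 1/2| ≤ t} :=
      le_trans (measure_mono hsub) (measure_union_le _ _)
    have hfin1 : μ (wedge β β0 ∩ A) ≠ ⊤ := measure_ne_top μ _
    have hfin2 : μ {x | |η x - 1/2| ≤ t} ≠ ⊤ := measure_ne_top μ _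
    have hmb : dDelta μ β β0 - C * t ≤ (μ (wedge β β0 ∩ A)).toReal := by
      have h4 : (μ (wedge β β0)).toReal
          ≤ (μ (wedge β β0 ∩ A)).toReal + (μ {x | |η x - 1/2| ≤ t}).toReal := by
        rw [← ENNReal.toReal_add hfin1 hfin2]
        exact ENNReal.toReal_mono (by finiteness) hmeas_le
      have h5 := htrans t ht
      rw [dDelta]
      linarith
    have ht0 : 0 ≤ t := ht.1
    calc 4 * t * (dDelta μ β β0 - C * t)
        ≤ 4 * t * (μ (wedge β β0 ∩ A)).toReal := by nlinarith
      _ = (μ (wedge β β0 ∩ A)).toReal * (4 * t) := by ring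
      _ ≤ ∫ x, (wedge β β0).indicator (fun x => 2 * |2 * η x - 1|) x ∂μ := hmono
      _ = popScore μ η β0 - popScore μ η β := hdiff.symm
  have hd0 : 0 ≤ dDelta μ β β0 := ENNReal.toReal_nonneg
  have hw := hwedge β hβ
  have hn0 : 0 ≤ ‖β - β0‖ := norm_nonneg _
  constructor
  · intro hd
    set d := dDelta μ β β0 with hd_def
    have htmem : d / (2 * C) ∈ Set.Icc (0 : ℝ) tstar := by
      constructor
      · positivity
      · rw [div_le_iff₀ (by positivity)]
        linarith
    have hk := key _ htmem
    have heq : 4 * (d / (2 * C)) * (d - C * (d / (2 * C))) = d ^ 2 / C := by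
      field_simp
      ring
    rw [heq] at hk
    have hsq : c₁ ^ 2 / C * ‖β - β0‖ ^ 2 ≤ d ^ 2 / C := by
      rw [div_mul_eq_mul_div]
      gcongr
      calc c₁ ^ 2 * ‖β - β0‖ ^ 2 = (c₁ * ‖β - β0‖) ^ 2 := by ring
        _ ≤ d ^ 2 := pow_le_pow_left₀ (by positivity) hw 2
    linarith
  · intro hd
    have hk := key tstar ⟨htstar.1.le, le_refl _⟩
    nlinarith [htstar.1, mul_pos htstar.1 hc₁]
end

section
/- For all real numbers p ∈ [0,1] and q ∈ [1/4,3/4], the Kullback–Leibler divergence between Bernoulli(p) and Bernoulli(q) satisfies p·log(p/q) + (1−p)·log((1−p)/(1−q)) ≤ (16/3)·(p−q)², where terms of the form 0·log(0/·) are interpreted as 0. -/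
/-!
Bounding `log t ≤ t - 1` in each term dominates the Bernoulli KL divergence by the χ²-divergence
`(p - q)² / (q (1 - q))`, and `q (1 - q) ≥ 3/16` for `q ∈ [1/4, 3/4]`.
-/

open Real

lemma mul_log_div_le_mul_sub_div {x y : ℝ} (hx : 0 ≤ x) (hy : 0 < y) :
    x * log (x / y) ≤ x * (x - y) / y := by
  rcases hx.eq_or_lt with rfl | hx
  · simp
  calc x * log (x / y) ≤ x * (x / y - 1) :=
        mul_le_mul_of_nonneg_left (log_le_sub_one_of_pos (div_pos hx hy)) hx.le
    _ = x * (x - y) / y := by field_simp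

lemma bernoulli_kl_le_chiSq {p q : ℝ} (hp₀ : 0 ≤ p) (hp₁ : p ≤ 1) (hq₀ : 0 < q) (hq₁ : q < 1) :
    p * log (p / q) + (1 - p) * log ((1 - p) / (1 - q)) ≤ (p - q) ^ 2 / (q * (1 - q)) := by
  have hq₁' : 0 < 1 - q := sub_pos.mpr hq₁
  calc p * log (p / q) + (1 - p) * log ((1 - p) / (1 - q))
      ≤ p * (p - q) / q + (1 - p) * ((1 - p) - (1 - q)) / (1 - q) :=
        add_le_add (mul_log_div_le_mul_sub_div hp₀ hq₀)
          (mul_log_div_le_mul_sub_div (sub_nonneg.mpr hp₁) hq₁')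
    _ = (p - q) ^ 2 / (q * (1 - q)) := by field_simp; ring

lemma three_div_sixteen_le_mul_one_sub {q : ℝ} (hq : q ∈ Set.Icc (1/4 : ℝ) (3/4)) :
    3 / 16 ≤ q * (1 - q) := by
  nlinarith [hq.1, hq.2]

theorem kl_bernoulli_le (p q : ℝ) (hp : p ∈ Set.Icc (0 : ℝ) 1)
    (hq : q ∈ Set.Icc (1/4 : ℝ) (3/4)) :
    p * Real.log (p / q) + (1 - p) * Real.log ((1 - p) / (1 - q)) ≤
      16 / 3 * (p - q) ^ 2 := by
  have hvar := three_div_sixteen_le_mul_one_sub hq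
  calc p * Real.log (p / q) + (1 - p) * Real.log ((1 - p) / (1 - q))
      ≤ (p - q) ^ 2 / (q * (1 - q)) :=
        bernoulli_kl_le_chiSq hp.1 hp.2 (by linarith [hq.1]) (by linarith [hq.2])
    _ ≤ (p - q) ^ 2 / (3 / 16) := by gcongr
    _ = 16 / 3 * (p - q) ^ 2 := by ring
end

section
/- For all real numbers p, q ∈ [1/4,3/4], writing s = (p+q)/2, the squared Hellinger distance between Bernoulli(p) and Bernoulli(q) satisfies 1 − √(p·q) − √((1−p)·(1−q)) ≤ (q−p)² / (4·√3·s·(1−s)). -/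
/-!
Write `m = (x + y) / 2` and `d = (x - y) / 2`, so that `x * y = m ^ 2 - d ^ 2`. Completing the
square gives `2 √(xy) (m - √(xy)) ≤ d ^ 2`, and when `x / y ∈ [1/3, 3]` the geometric mean is at
least `(√3 / 2) m`; hence `m - √(xy) ≤ d ^ 2 / (√3 m)`. The squared Hellinger distance is the sum
of this gap for the pairs `(p, q)` and `(1 - p, 1 - q)`, and `1/s + 1/(1 - s) = 1/(s (1 - s))`.
-/

namespace Real

theorem sqrt_mul_le_add_div_two {x y : ℝ} (hx : 0 ≤ x) (hy : 0 ≤ y) :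
    √(x * y) ≤ (x + y) / 2 :=
  sqrt_le_iff.mpr ⟨by linarith, by nlinarith [sq_nonneg (x - y)]⟩

theorem two_mul_sqrt_mul_mul_add_div_two_sub_le {x y : ℝ} (hx : 0 ≤ x) (hy : 0 ≤ y) :
    2 * √(x * y) * ((x + y) / 2 - √(x * y)) ≤ ((x - y) / 2) ^ 2 := by
  have hsq : √(x * y) ^ 2 = x * y := sq_sqrt (mul_nonneg hx hy)
  nlinarith [sq_nonneg ((x + y) / 2 - √(x * y))]

theorem sqrt_three_mul_add_div_two_le_two_mul_sqrt_mul {x y : ℝ} (hx : 0 ≤ x)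
    (hxy : x ≤ 3 * y) (hyx : y ≤ 3 * x) :
    √3 * ((x + y) / 2) ≤ 2 * √(x * y) := by
  have hy : 0 ≤ y := by linarith
  calc √3 * ((x + y) / 2) = √(3 * ((x + y) / 2) ^ 2) := by
        rw [sqrt_mul (by norm_num), sqrt_sq (by linarith)]
    _ ≤ √(4 * (x * y)) :=
        sqrt_le_sqrt (by nlinarith [mul_nonneg (sub_nonneg.mpr hxy) (sub_nonneg.mpr hyx)])
    _ = 2 * √(x * y) := by
        rw [sqrt_mul (by norm_num), show (4 : ℝ) = 2 ^ 2 by norm_num, sqrt_sq (by norm_num)]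

theorem add_div_two_sub_sqrt_mul_le {x y : ℝ} (hx : 0 < x) (hxy : x ≤ 3 * y) (hyx : y ≤ 3 * x) :
    (x + y) / 2 - √(x * y) ≤ (x - y) ^ 2 / (4 * √3 * ((x + y) / 2)) := by
  have hy : 0 < y := by linarith
  have hgap : 0 ≤ (x + y) / 2 - √(x * y) := sub_nonneg.mpr (sqrt_mul_le_add_div_two hx.le hy.le)
  have hmean := sqrt_three_mul_add_div_two_le_two_mul_sqrt_mul hx.le hxy hyx
  have hsquare := two_mul_sqrt_mul_mul_add_div_two_sub_le hx.le hy.le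
  rw [le_div_iff₀ (by positivity)]
  nlinarith [mul_le_mul_of_nonneg_right hmean hgap]

end Real

theorem hellinger_bernoulli_le (p q : ℝ) (hp : p ∈ Set.Icc (1/4 : ℝ) (3/4))
    (hq : q ∈ Set.Icc (1/4 : ℝ) (3/4)) :
    1 - Real.sqrt (p * q) - Real.sqrt ((1 - p) * (1 - q)) ≤
      (q - p) ^ 2 / (4 * Real.sqrt 3 * ((p + q) / 2) * (1 - (p + q) / 2)) := by
  obtain ⟨hp₁, hp₂⟩ := hp
  obtain ⟨hq₁, hq₂⟩ := hq
  have hgap₁ := Real.add_div_two_sub_sqrt_mul_le (x := p) (y := q)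
    (by linarith) (by linarith) (by linarith)
  have hgap₂ := Real.add_div_two_sub_sqrt_mul_le (x := 1 - p) (y := 1 - q)
    (by linarith) (by linarith) (by linarith)
  have hs : 0 < (p + q) / 2 := by linarith
  have hs' : 0 < 1 - (p + q) / 2 := by linarith
  calc 1 - √(p * q) - √((1 - p) * (1 - q))
      = ((p + q) / 2 - √(p * q)) + ((1 - p + (1 - q)) / 2 - √((1 - p) * (1 - q))) := by ring
    _ ≤ (p - q) ^ 2 / (4 * √3 * ((p + q) / 2)) +
        (1 - p - (1 - q)) ^ 2 / (4 * √3 * ((1 - p + (1 - q)) / 2)) := add_le_add hgap₁ hgap₂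
    _ = (q - p) ^ 2 / (4 * √3 * ((p + q) / 2) * (1 - (p + q) / 2)) := by
        rw [show (1 - p + (1 - q)) / 2 = 1 - (p + q) / 2 by ring,
          div_add_div _ _ (by positivity) (by positivity),
          div_eq_div_iff (by positivity) (by positivity)]
        ring
end

section
/- For every real number p ∈ [0,1/2], the Kullback–Leibler divergence between Bernoulli(2p) and Bernoulli(p) satisfies 2p·log 2 + (1−2p)·log((1−2p)/(1−p)) ≥ p·(log 4 − 1), where terms of the form 0·log 0 are interpreted as 0. -/
/-! Since `log 4 = 2 log 2`, the claim is `-p ≤ (1 - 2p) log ((1 - 2p)/(1 - p))`, which is the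
pointwise Gibbs inequality `a - b ≤ a log (a / b)` at `a = 1 - 2p`, `b = 1 - p`. -/

open Real

theorem sub_le_mul_log_div {a b : ℝ} (ha : 0 ≤ a) (hb : 0 < b) : a - b ≤ a * log (a / b) := by
  rcases ha.eq_or_lt with rfl | ha
  · simpa using hb.le
  · have hlog : 1 - b / a ≤ log (a / b) := by
      simpa only [inv_div] using one_sub_inv_le_log_of_pos (div_pos ha hb)
    calc a - b = a * (1 - b / a) := by field_simp
      _ ≤ a * log (a / b) := mul_le_mul_of_nonneg_left hlog ha.le

theorem kl_bernoulli_two_p_ge (p : ℝ) (hp : p ∈ Set.Icc (0 : ℝ) (1/2)) :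
    p * (Real.log 4 - 1) ≤
      2 * p * Real.log 2 + (1 - 2 * p) * Real.log ((1 - 2 * p) / (1 - p)) := by
  obtain ⟨-, hp_le⟩ := hp
  have hlog_four : log 4 = 2 * log 2 := by
    rw [show (4 : ℝ) = 2 ^ 2 by norm_num, log_pow, Nat.cast_ofNat]
  have hgibbs := sub_le_mul_log_div (a := 1 - 2 * p) (b := 1 - p) (by linarith) (by linarith)
  rw [hlog_four]
  linarith
end

section
/- Let ν and μ be probability measures on ℝ, each absolutely continuous with respect to Lebesgue measure, with densities f_ν and f_μ. Let c > 0, k ≥ 0 and δ, δ' > 0, and suppose: f_ν(x) ≥ c for Lebesgue-a.e. x ∈ (−δ,δ); f_μ(x) ≤ k for Lebesgue-a.e. x ∈ (−δ',δ'); and F(0) = 1/2, where F(a) = ν((−∞,a]). Then for every real t with 0 ≤ t ≤ c·min(δ,δ'): μ{ z ∈ ℝ : |F(−z) − 1/2| < t } ≤ 2k·t/c. -/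
/-!
With `m = t / c`, the lower density bound gives `ν` mass at least `c * m = t` on each of
`(-m, 0]` and `(0, m]`. Since `0` is a median of `ν`, the CDF is then at distance at least `t`
from `1/2` outside `(-m, m)`, so the set in question lies in `(-m, m)`, whose `μ`-mass is at most
`2 * k * m` by the upper density bound.
-/

open MeasureTheory ProbabilityTheory Set
open scoped ENNReal

namespace MeasureTheory

variable {α : Type*} [MeasurableSpace α] {μ : Measure α} {f : α → ℝ≥0∞} {s : Set α} {C : ℝ≥0∞}

theorem mul_measure_le_withDensity_apply (hs : MeasurableSet s) (h : ∀ᵐ x ∂μ, x ∈ s → C ≤ f x) :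
    C * μ s ≤ μ.withDensity f s := by
  rw [withDensity_apply _ hs, ← setLIntegral_const]
  exact setLIntegral_mono_ae' hs h

theorem withDensity_apply_le_mul_measure (hs : MeasurableSet s) (h : ∀ᵐ x ∂μ, x ∈ s → f x ≤ C) :
    μ.withDensity f s ≤ C * μ s := by
  rw [withDensity_apply _ hs, ← setLIntegral_const]
  exact setLIntegral_mono_ae' hs h

end MeasureTheory

section Real

variable {f : ℝ → ℝ≥0∞} {a b c : ℝ}

theorem le_withDensity_real_Ioo [IsFiniteMeasure (volume.withDensity f)] (hc : 0 ≤ c)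
    (h : ∀ᵐ x, x ∈ Ioo a b → ENNReal.ofReal c ≤ f x) :
    c * (b - a) ≤ (volume.withDensity f).real (Ioo a b) := by
  rw [measureReal_def, ← ENNReal.ofReal_le_iff_le_toReal (measure_ne_top _ _),
    ENNReal.ofReal_mul hc, ← Real.volume_Ioo]
  exact mul_measure_le_withDensity_apply measurableSet_Ioo h

theorem withDensity_Ioo_le_ofReal (hc : 0 ≤ c) (h : ∀ᵐ x, x ∈ Ioo a b → f x ≤ ENNReal.ofReal c) :
    volume.withDensity f (Ioo a b) ≤ ENNReal.ofReal (c * (b - a)) := by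
  rw [ENNReal.ofReal_mul hc, ← Real.volume_Ioo]
  exact withDensity_apply_le_mul_measure measurableSet_Ioo h

end Real

namespace ProbabilityTheory

variable (μ : Measure ℝ) [IsProbabilityMeasure μ]

theorem measureReal_Ioc_eq_cdf_sub {a b : ℝ} (hab : a ≤ b) :
    μ.real (Ioc a b) = cdf μ b - cdf μ a := by
  have h := (cdf μ).measure_Ioc a b
  rw [measure_cdf] at h
  rw [measureReal_def, h, ENNReal.toReal_ofReal (sub_nonneg.2 (monotone_cdf μ hab))]

theorem mem_Ioo_of_abs_cdf_sub_lt {l a r t x : ℝ} (hla : l ≤ a) (har : a ≤ r)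
    (hl : t ≤ μ.real (Ioc l a)) (hr : t ≤ μ.real (Ioc a r)) (hx : |cdf μ x - cdf μ a| < t) :
    x ∈ Ioo l r := by
  rw [abs_lt] at hx
  constructor
  · by_contra! hxl
    have : μ.real (Ioc l a) ≤ cdf μ a - cdf μ x := by
      rw [← measureReal_Ioc_eq_cdf_sub μ (hxl.trans hla)]
      exact measureReal_mono (Ioc_subset_Ioc_left hxl)
    linarith
  · by_contra! hrx
    have : μ.real (Ioc a r) ≤ cdf μ x - cdf μ a := by
      rw [← measureReal_Ioc_eq_cdf_sub μ (har.trans hrx)]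
      exact measureReal_mono (Ioc_subset_Ioc_right hrx)
    linarith

end ProbabilityTheory

theorem transition_condition_from_densities_general
    (ν μ : Measure ℝ) [IsProbabilityMeasure ν]
    (fν fμ : ℝ → ℝ≥0∞)
    (hν : ν = volume.withDensity fν)
    (hμ : μ = volume.withDensity fμ)
    (c k δ δ' : ℝ) (hc : 0 < c) (hk : 0 ≤ k)
    (hlow : ∀ᵐ x ∂(volume : Measure ℝ), x ∈ Set.Ioo (-δ) δ → ENNReal.ofReal c ≤ fν x)
    (hupp : ∀ᵐ x ∂(volume : Measure ℝ), x ∈ Set.Ioo (-δ') δ' → fμ x ≤ ENNReal.ofReal k)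
    (hmed : (ν (Set.Iic 0)).toReal = 1/2)
    (t : ℝ) (ht0 : 0 ≤ t) (ht1 : t ≤ c * min δ δ') :
    (μ {z : ℝ | |(ν (Set.Iic (-z))).toReal - 1/2| < t}).toReal ≤ 2 * k * t / c := by
  subst hν hμ
  set m := t / c
  have hcm : c * m = t := mul_div_cancel₀ t hc.ne'
  have hm0 : 0 ≤ m := div_nonneg ht0 hc.le
  have hmδ : m ≤ δ := ((div_le_iff₀' hc).2 ht1).trans (min_le_left δ δ')
  have hmδ' : m ≤ δ' := ((div_le_iff₀' hc).2 ht1).trans (min_le_right δ δ')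
  have hlow_on {a b : ℝ} (ha : -δ ≤ a) (hb : b ≤ δ) :=
    hlow.mono fun x hx hxab => hx (Ioo_subset_Ioo ha hb hxab)
  have hupp_on {a b : ℝ} (ha : -δ' ≤ a) (hb : b ≤ δ') :=
    hupp.mono fun x hx hxab => hx (Ioo_subset_Ioo ha hb hxab)
  have hleft : t ≤ (volume.withDensity fν).real (Ioc (-m) 0) := calc
    t = c * (0 - -m) := by rw [zero_sub, neg_neg, hcm]
    _ ≤ _ := le_withDensity_real_Ioo hc.le (hlow_on (by linarith) (by linarith))
    _ ≤ _ := measureReal_mono Ioo_subset_Ioc_self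
  have hright : t ≤ (volume.withDensity fν).real (Ioc 0 m) := calc
    t = c * (m - 0) := by rw [sub_zero, hcm]
    _ ≤ _ := le_withDensity_real_Ioo hc.le (hlow_on (by linarith) hmδ)
    _ ≤ _ := measureReal_mono Ioo_subset_Ioc_self
  have hsub_Ioo : {z : ℝ | |(volume.withDensity fν (Iic (-z))).toReal - 1/2| < t} ⊆ Ioo (-m) m := by
    intro z hz
    rw [mem_ofPred_eq, ← measureReal_def, ← cdf_eq_real, ← hmed, ← measureReal_def,
      ← cdf_eq_real] at hz
    have := mem_Ioo_of_abs_cdf_sub_lt _ (neg_nonpos.2 hm0) hm0 hleft hright hz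
    exact ⟨by linarith [this.2], by linarith [this.1]⟩
  calc _ ≤ k * (m - -m) := ENNReal.toReal_le_of_le_ofReal (mul_nonneg hk (by linarith))
        ((measure_mono hsub_Ioo).trans (withDensity_Ioo_le_ofReal hk (hupp_on (by linarith) hmδ')))
    _ = 2 * k * t / c := by rw [← hcm]; field_simp; ring

theorem transition_condition_from_densities
    (ν μ : Measure ℝ) [IsProbabilityMeasure ν] [IsProbabilityMeasure μ]
    (fν fμ : ℝ → ℝ≥0∞) (hfν : Measurable fν) (hfμ : Measurable fμ)
    (hν : ν = volume.withDensity fν)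
    (hμ : μ = volume.withDensity fμ)
    (c k δ δ' : ℝ) (hc : 0 < c) (hk : 0 ≤ k) (hδ : 0 < δ) (hδ' : 0 < δ')
    (hlow : ∀ᵐ x ∂(volume : Measure ℝ), x ∈ Set.Ioo (-δ) δ → ENNReal.ofReal c ≤ fν x)
    (hupp : ∀ᵐ x ∂(volume : Measure ℝ), x ∈ Set.Ioo (-δ') δ' → fμ x ≤ ENNReal.ofReal k)
    (hmed : (ν (Set.Iic 0)).toReal = 1/2)
    (t : ℝ) (ht0 : 0 ≤ t) (ht1 : t ≤ c * min δ δ') :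
    (μ {z : ℝ | |(ν (Set.Iic (-z))).toReal - 1/2| < t}).toReal ≤ 2 * k * t / c :=
  transition_condition_from_densities_general ν μ fν fμ hν hμ c k δ δ' hc hk hlow hupp hmed t ht0
    ht1
end

section
/- Let m ∈ ℕ and let q, u, v : Fin m → ℝ. Assume q is nonnegative, the values u(1),…,u(m) are pairwise distinct, and u(j) > u(k) implies q(j) ≥ q(k) for all j, k. Then Σ_{j} q(j)·#{k : k ≠ j and v(j) > v(k)} ≤ Σ_{j} q(j)·#{k : k ≠ j and u(j) > u(k)}. -/
/-!
For a ranking `w`, the sum is the total weight `q j` over ordered pairs `(j, k)` with `w k < w j`.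
Grouping the pairs `(j, k)` and `(k, j)`, every unordered pair contributes at most
`max (q j) (q k)` for an arbitrary `w`, and exactly that much for `w = u`, because `u`
separates `j` and `k` and ranks the larger weight higher.
-/

open Finset

section

variable {ι α 𝕜 : Type*}

theorem sum_sum_le_of_add_swap_le [Fintype ι] [Field 𝕜] [LinearOrder 𝕜]
    [IsStrictOrderedRing 𝕜]
    {F G : ι → ι → 𝕜} (h : ∀ j k, F j k + F k j ≤ G j k + G k j) :
    ∑ j, ∑ k, F j k ≤ ∑ j, ∑ k, G j k := by
  have hsum : ∑ j, ∑ k, (F j k + F k j) ≤ ∑ j, ∑ k, (G j k + G k j) :=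
    sum_le_sum fun j _ => sum_le_sum fun k _ => h j k
  simp only [sum_add_distrib] at hsum
  rw [sum_comm (f := fun j k => F k j), sum_comm (f := fun j k => G k j)] at hsum
  linarith

theorem mul_card_filter_ne_lt [Fintype ι] [DecidableEq ι] [Preorder α] [DecidableLT α]
    [NonAssocSemiring 𝕜] (q : ι → 𝕜) (w : ι → α) (j : ι) :
    q j * ((univ.filter fun k => k ≠ j ∧ w k < w j).card : 𝕜) =
      ∑ k, if w k < w j then q j else 0 := by
  have hfilter : univ.filter (fun k => k ≠ j ∧ w k < w j) = univ.filter (fun k => w k < w j) :=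
    filter_congr fun k _ => and_iff_right_of_imp fun hk hkj => (hkj ▸ hk).false
  rw [hfilter, sum_ite, sum_const_zero, add_zero, sum_const, nsmul_eq_mul, Nat.cast_comm]

theorem ite_lt_add_ite_lt_le_max [Preorder α] [DecidableLT α] [AddZeroClass 𝕜]
    [LinearOrder 𝕜] {a b : α} {x y : 𝕜} (hx : 0 ≤ x) :
    (if b < a then x else 0) + (if a < b then y else 0) ≤ max x y := by
  split_ifs with hba hab
  · exact absurd hab hba.not_gt
  all_goals simp [hx]

theorem ite_lt_add_ite_lt_eq_max [LinearOrder α] [AddZeroClass 𝕜] [LinearOrder 𝕜]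
    {a b : α} {x y : 𝕜} (hab : a ≠ b) (hyx : b < a → y ≤ x) (hxy : a < b → x ≤ y) :
    (if b < a then x else 0) + (if a < b then y else 0) = max x y := by
  rcases hab.lt_or_gt with hab | hba
  · simp [hab, hab.not_gt, hxy hab]
  · simp [hba, hba.not_gt, hyx hba]

end

open scoped Classical

theorem rank_alignment_maximizes (m : ℕ) (q u v : Fin m → ℝ)
    (hq : ∀ j, 0 ≤ q j)
    (hu : Function.Injective u)
    (hmono : ∀ j k, u k < u j → q k ≤ q j) :
    ∑ j : Fin m, q j *
        ((Finset.univ.filter fun k : Fin m => k ≠ j ∧ v k < v j).card : ℝ) ≤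
      ∑ j : Fin m, q j *
        ((Finset.univ.filter fun k : Fin m => k ≠ j ∧ u k < u j).card : ℝ) := by
  simp only [mul_card_filter_ne_lt]
  refine sum_sum_le_of_add_swap_le fun j k => ?_
  rcases eq_or_ne j k with rfl | hjk
  · simp
  calc (if v k < v j then q j else 0) + (if v j < v k then q k else 0)
      ≤ max (q j) (q k) := ite_lt_add_ite_lt_le_max (hq j)
    _ = (if u k < u j then q j else 0) + (if u j < u k then q k else 0) :=
      (ite_lt_add_ite_lt_eq_max (hu.ne hjk) (hmono j k) (hmono k j)).symm
end
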